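/- arXiv:1010.0507 — 2 statements merged into one kernel-verified Lean document; each statement's English description precedes it below -/
import Mathlib

section
/- For real q with 0 < q < 1, x1, x2 in [0,1], and natural n >= 2, the sum over k from 0 to n of (k/n)^2 * B_{k,n}(x1,x2|q) equals ((n-1)/n) * [x1]_q^2 * (1+[x1]_q-[x2]_q)^{n-2} + ([x1]_q/n) * (1+[x1]_q-[x2]_q)^{n-1}. -/
/-!
Since `q⁻¹ ^ (1 - x) = q ^ x / q`, the `q⁻¹`-number `[1 - x₂]_{q⁻¹}` equals `1 - [x₂]_q`, so
`B_{k,n}` is the `k`-th term of the binomial expansion of `(a + b) ^ n` with `a = [x₁]_q` and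
`b = 1 - [x₂]_q`. Writing `k ^ 2 = k (k - 1) + k` reduces the sum to the two factorial moments
`∑ k (k - 1) C(n,k) a^k b^(n-k) = n (n - 1) a² (a + b)^(n-2)` and
`∑ k C(n,k) a^k b^(n-k) = n a (a + b)^(n-1)`.
-/

noncomputable def qNum (q x : ℝ) : ℝ := (1 - q ^ x) / (1 - q)

noncomputable def qBern (q : ℝ) (k n : ℕ) (x1 x2 : ℝ) : ℝ :=
  (n.choose k : ℝ) * (qNum q x1) ^ k * (qNum q⁻¹ (1 - x2)) ^ (n - k)

theorem qNum_inv_one_sub {q : ℝ} (hq0 : 0 < q) (hq1 : q ≠ 1) (x : ℝ) :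
    qNum q⁻¹ (1 - x) = 1 - qNum q x := by
  have hq : 1 - q ≠ 0 := sub_ne_zero.mpr hq1.symm
  have hqinv : 1 - q⁻¹ ≠ 0 := sub_ne_zero.mpr (by simpa [eq_comm] using hq1)
  have hpow : q⁻¹ ^ (1 - x) = q ^ x / q := by
    rw [Real.inv_rpow hq0.le, Real.rpow_sub hq0, Real.rpow_one, inv_div]
  rw [qNum, qNum, hpow, div_eq_iff hqinv]
  field_simp
  ring

theorem descFactorial_succ_mul_choose_succ (m k j : ℕ) :
    (k + 1).descFactorial (j + 1) * (m + 1).choose (k + 1)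
      = (m + 1) * (k.descFactorial j * m.choose k) := by
  rw [Nat.succ_descFactorial_succ, mul_comm (k + 1), mul_assoc, mul_comm (k + 1),
    ← Nat.add_one_mul_choose_eq]
  ring

theorem sum_descFactorial_mul_choose_mul_pow {R : Type*} [CommSemiring R] (a b : R) (j n : ℕ) :
    ∑ k ∈ Finset.range (n + 1), ((k.descFactorial j * n.choose k : ℕ) : R) * a ^ k * b ^ (n - k)
      = n.descFactorial j * a ^ j * (a + b) ^ (n - j) := by
  induction j generalizing n with
  | zero =>
    simp only [Nat.descFactorial_zero, one_mul, pow_zero, Nat.cast_one, Nat.sub_zero, add_pow]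
    exact Finset.sum_congr rfl fun k _ => by ring
  | succ j ih =>
    cases n with
    | zero => simp
    | succ m =>
      rw [Finset.sum_range_succ', Nat.zero_descFactorial_succ, zero_mul, Nat.cast_zero, zero_mul,
        zero_mul, add_zero]
      simp only [descFactorial_succ_mul_choose_succ, Nat.add_sub_add_right]
      calc ∑ k ∈ Finset.range (m + 1),
            (((m + 1) * (k.descFactorial j * m.choose k) : ℕ) : R) * a ^ (k + 1) * b ^ (m - k)
          = (m + 1 : ℕ) * a * ∑ k ∈ Finset.range (m + 1),
              ((k.descFactorial j * m.choose k : ℕ) : R) * a ^ k * b ^ (m - k) := by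
            rw [Finset.mul_sum]
            exact Finset.sum_congr rfl fun k _ => by push_cast; ring
        _ = _ := by rw [ih, Nat.succ_descFactorial_succ]; push_cast; ring

theorem qBern_sum_square_general (q : ℝ) (hq0 : 0 < q) (hq1 : q < 1)
    (x1 x2 : ℝ)
    (n : ℕ) (hn : 2 ≤ n) :
    ∑ k ∈ Finset.range (n + 1), ((k : ℝ) / n) ^ 2 * qBern q k n x1 x2
      = (((n : ℝ) - 1) / n) * (qNum q x1) ^ 2 * (1 + qNum q x1 - qNum q x2) ^ (n - 2)
        + (qNum q x1 / n) * (1 + qNum q x1 - qNum q x2) ^ (n - 1) := by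
  set a := qNum q x1
  set c := qNum q x2
  have hb : qNum q⁻¹ (1 - x2) = 1 - c := qNum_inv_one_sub hq0 hq1.ne x2
  have hn0 : (n : ℝ) ≠ 0 := by positivity
  have hsum : a + (1 - c) = 1 + a - c := by ring
  -- `k ^ 2` is the sum of the first two factorial moments `k (k - 1)` and `k`.
  have split : ∑ k ∈ Finset.range (n + 1), ((k : ℝ) / n) ^ 2 * qBern q k n x1 x2
      = (∑ k ∈ Finset.range (n + 1),
            ((k.descFactorial 2 * n.choose k : ℕ) : ℝ) * a ^ k * (1 - c) ^ (n - k)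
          + ∑ k ∈ Finset.range (n + 1),
            ((k.descFactorial 1 * n.choose k : ℕ) : ℝ) * a ^ k * (1 - c) ^ (n - k)) / n ^ 2 := by
    rw [← Finset.sum_add_distrib, Finset.sum_div]
    refine Finset.sum_congr rfl fun k _ => ?_
    rw [qBern, hb]
    push_cast
    rw [Nat.cast_descFactorial_two, Nat.descFactorial_one]
    field_simp
    ring
  rw [split, sum_descFactorial_mul_choose_mul_pow, sum_descFactorial_mul_choose_mul_pow, hsum,
    Nat.cast_descFactorial_two, Nat.descFactorial_one]
  field_simp

theorem qBern_sum_square (q : ℝ) (hq0 : 0 < q) (hq1 : q < 1)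
    (x1 x2 : ℝ) (hx1 : x1 ∈ Set.Icc (0:ℝ) 1) (hx2 : x2 ∈ Set.Icc (0:ℝ) 1)
    (n : ℕ) (hn : 2 ≤ n) :
    ∑ k ∈ Finset.range (n + 1), ((k : ℝ) / n) ^ 2 * qBern q k n x1 x2
      = (((n : ℝ) - 1) / n) * (qNum q x1) ^ 2 * (1 + qNum q x1 - qNum q x2) ^ (n - 2)
        + (qNum q x1 / n) * (1 + qNum q x1 - qNum q x2) ^ (n - 1) :=
  qBern_sum_square_general q hq0 hq1 x1 x2 n hn
end

section
/- The Carlitz q-Bernoulli polynomials satisfy the reflection formula beta_{n,q^{-1}}(1-x) = (-1)^n q^n beta_{n,q}(x) for all n >= 0. -/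
/-- The q-number [m]_q = (1 - q^m)/(1 - q) for q in the p-adic numbers and integer m. -/
noncomputable def qNumZ (p : ℕ) [Fact p.Prime] (q : ℚ_[p]) (m : ℤ) : ℚ_[p] :=
  (1 - q ^ m) / (1 - q)

/-- `IsPadicQIntegral p q f I` says the bosonic p-adic q-integral
`I_q(f) = lim_N (1/[p^N]_q) ∑_{x=0}^{p^N-1} f(x) q^x` exists and equals `I`. -/
def IsPadicQIntegral (p : ℕ) [Fact p.Prime] (q : ℚ_[p]) (f : ℕ → ℚ_[p]) (I : ℚ_[p]) : Prop :=
  Filter.Tendsto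
    (fun N : ℕ => (∑ x ∈ Finset.range (p ^ N), f x * q ^ x) / qNumZ p q ((p : ℤ) ^ N))
    Filter.atTop (nhds I)

/-!
Expanding `[x + y]_q ^ n` binomially turns the `N`-th Riemann sum into a combination of geometric
sums in the `q ^ (k + 1)`, which is a polynomial in `q ^ p ^ N`. Since `q ^ p ^ N → 1`, the
integral is Carlitz's closed form, and the reflection formula becomes an identity between closed
forms under `q ↦ q⁻¹`, `x ↦ 1 - x`. When `q` is a root of unity, the normalising factors
`[p ^ N]_q` are eventually `0`, and the convention `x / 0 = 0` makes both integrals `0`.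
-/

open Filter Finset Topology

section Ultrametric

variable {K : Type*} [NormedField K] [IsUltrametricDist K]

lemma norm_eq_one_of_norm_one_sub_lt_one {q : K} (hq : ‖1 - q‖ < 1) : ‖q‖ = 1 := by
  have h := IsUltrametricDist.norm_add_eq_max_of_norm_ne_norm
    (x := (1 : K)) (y := -(1 - q)) (by rw [norm_one, norm_neg]; exact hq.ne')
  rwa [show (1 : K) + -(1 - q) = q by ring, norm_one, norm_neg, max_eq_left hq.le] at h

lemma ne_zero_of_norm_one_sub_lt_one {q : K} (hq : ‖1 - q‖ < 1) : q ≠ 0 :=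
  norm_ne_zero_iff.mp (by simp [norm_eq_one_of_norm_one_sub_lt_one hq])

lemma norm_one_sub_inv_lt_one {q : K} (hq : ‖1 - q‖ < 1) : ‖1 - q⁻¹‖ < 1 := by
  have hq1 := norm_eq_one_of_norm_one_sub_lt_one hq
  have hq0 := ne_zero_of_norm_one_sub_lt_one hq
  rwa [show 1 - q⁻¹ = -(1 - q) * q⁻¹ by field_simp; ring, norm_mul, norm_neg, norm_inv, hq1,
    inv_one, mul_one]

lemma norm_pow_sub_one_le {q : K} (hq : ‖q‖ ≤ 1) (m : ℕ) : ‖q ^ m - 1‖ ≤ ‖q - 1‖ := by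
  rw [← geom_sum_mul, norm_mul]
  refine mul_le_of_le_one_left (norm_nonneg _) ?_
  refine IsUltrametricDist.norm_sum_le_of_forall_le_of_nonneg zero_le_one fun j _ => ?_
  rw [norm_pow]
  exact pow_le_one₀ (norm_nonneg q) hq

/-- The geometric sum `∑_{j<m} z ^ j` is `m` up to an error of norm at most `‖z - 1‖`. -/
lemma norm_pow_sub_one_le_max_mul {z : K} (hz : ‖z‖ ≤ 1) (m : ℕ) :
    ‖z ^ m - 1‖ ≤ max ‖(m : K)‖ ‖z - 1‖ * ‖z - 1‖ := by
  rw [← geom_sum_mul, norm_mul]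
  refine mul_le_mul_of_nonneg_right ?_ (norm_nonneg _)
  have hsplit : ∑ j ∈ range m, z ^ j = m + ∑ j ∈ range m, (z ^ j - 1) := by
    simp [Finset.sum_sub_distrib]
  rw [hsplit]
  refine (IsUltrametricDist.norm_add_le_max _ _).trans (max_le_max le_rfl ?_)
  exact IsUltrametricDist.norm_sum_le_of_forall_le_of_nonneg (norm_nonneg _)
    fun j _ => norm_pow_sub_one_le hz j

lemma tendsto_pow_pow_nhds_one {p : ℕ} (hp : ‖(p : K)‖ < 1) {q : K} (hq : ‖1 - q‖ < 1) :
    Tendsto (fun N : ℕ => q ^ p ^ N) atTop (𝓝 1) := by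
  set c := max ‖(p : K)‖ ‖q - 1‖
  have hc : c < 1 := max_lt hp (by rwa [norm_sub_rev])
  have hc0 : 0 ≤ c := le_max_of_le_left (norm_nonneg _)
  have hq1 : ‖q‖ ≤ 1 := (norm_eq_one_of_norm_one_sub_lt_one hq).le
  have hbound (N : ℕ) : ‖q ^ p ^ N - 1‖ ≤ c ^ N * ‖q - 1‖ := by
    induction N with
    | zero => simp
    | succ N ih =>
      have hqN : ‖q ^ p ^ N‖ ≤ 1 := by
        rw [norm_pow]
        exact pow_le_one₀ (norm_nonneg q) hq1
      have hmax : max ‖(p : K)‖ ‖q ^ p ^ N - 1‖ ≤ c :=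
        max_le_max le_rfl (norm_pow_sub_one_le hq1 _)
      calc ‖q ^ p ^ (N + 1) - 1‖ = ‖(q ^ p ^ N) ^ p - 1‖ := by rw [← pow_mul, ← pow_succ]
        _ ≤ c * (c ^ N * ‖q - 1‖) :=
          (norm_pow_sub_one_le_max_mul hqN p).trans (mul_le_mul hmax ih (norm_nonneg _) hc0)
        _ = c ^ (N + 1) * ‖q - 1‖ := by ring
  rw [tendsto_iff_norm_sub_tendsto_zero]
  refine squeeze_zero (fun N => norm_nonneg _) hbound ?_
  simpa using (tendsto_pow_atTop_nhds_zero_of_lt_one hc0 hc).mul_const ‖q - 1‖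

/-- The powers `q ^ p ^ N` range over the finitely many `q ^ j`, `j < m`, and tend to `1`,
so they avoid every `q ^ j ≠ 1` eventually. -/
lemma eventually_pow_pow_eq_one {p : ℕ} (hp : ‖(p : K)‖ < 1) {q : K} (hq : ‖1 - q‖ < 1)
    {m : ℕ} (hm : m ≠ 0) (hqm : q ^ m = 1) : ∀ᶠ N in atTop, q ^ p ^ N = 1 := by
  have hne : ∀ᶠ N in atTop, ∀ j ∈ range m, q ^ j ≠ 1 → q ^ p ^ N ≠ q ^ j := by
    rw [eventually_all_finset]
    intro j _
    by_cases hj : q ^ j = 1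
    · simp [hj]
    · filter_upwards [(tendsto_pow_pow_nhds_one hp hq).eventually_ne (Ne.symm hj)]
        with N hN using fun _ => hN
  filter_upwards [hne] with N hN
  by_contra h
  have hmod := pow_eq_pow_mod (p ^ N) hqm
  exact hN _ (mem_range.2 (Nat.mod_lt _ (Nat.pos_of_ne_zero hm))) (hmod ▸ h) hmod

end Ultrametric

section ClosedForm

variable {K : Type*} [Field K]

/-- Carlitz's closed form: the `N`-th Riemann sum of `[x + y]_q ^ n` is `(1 - q) / (1 - q) ^ n`
times this at `a = q ^ x`, `t = q ^ p ^ N`; at `t = 1` it gives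
`β_{n,q}(x) = (1 - q)⁻ⁿ ∑ₖ C(n,k) (-q ^ x) ^ k (k + 1) / [k + 1]_q`. -/
noncomputable def carlitzPoly (q a : K) (n : ℕ) (t : K) : K :=
  ∑ k ∈ range (n + 1), n.choose k * (-a) ^ k * (∑ j ∈ range (k + 1), t ^ j) / (1 - q ^ (k + 1))

lemma continuous_carlitzPoly [TopologicalSpace K] [IsTopologicalRing K] (q a : K) (n : ℕ) :
    Continuous (carlitzPoly q a n) := by
  unfold carlitzPoly
  fun_prop

lemma sum_geom_pow_succ {q : K} {k : ℕ} (hk : q ^ (k + 1) ≠ 1) (P : ℕ) :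
    ∑ y ∈ range P, (q ^ (k + 1)) ^ y =
      (1 - q ^ P) * ((∑ j ∈ range (k + 1), (q ^ P) ^ j) / (1 - q ^ (k + 1))) := by
  have h1 : q ^ (k + 1) - 1 ≠ 0 := sub_ne_zero.2 hk
  have h2 : 1 - q ^ (k + 1) ≠ 0 := sub_ne_zero.2 (Ne.symm hk)
  rw [geom_sum_eq hk, ← pow_mul, mul_comm, pow_mul, ← geom_sum_mul]
  field_simp
  ring

lemma sum_one_sub_mul_pow_pow_mul_pow {q : K} (a : K) {n : ℕ}
    (hq : ∀ k ≤ n, q ^ (k + 1) ≠ 1) (P : ℕ) :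
    ∑ y ∈ range P, (1 - a * q ^ y) ^ n * q ^ y = (1 - q ^ P) * carlitzPoly q a n (q ^ P) := by
  have hbinom (y : ℕ) : (1 - a * q ^ y) ^ n * q ^ y =
      ∑ k ∈ range (n + 1), n.choose k * (-a) ^ k * (q ^ (k + 1)) ^ y := by
    rw [show 1 - a * q ^ y = -a * q ^ y + 1 by ring, add_pow, sum_mul]
    refine sum_congr rfl fun k _ => ?_
    ring
  rw [sum_congr rfl fun y _ => hbinom y, sum_comm, carlitzPoly, mul_sum]
  refine sum_congr rfl fun k hk => ?_
  rw [← mul_sum, sum_geom_pow_succ (hq k (Nat.lt_succ_iff.1 (mem_range.1 hk)))]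
  ring

lemma carlitzPoly_inv_div_one {q : K} (hq : q ≠ 0) (a : K) (n : ℕ) :
    carlitzPoly q⁻¹ (a / q) n 1 = -q * carlitzPoly q a n 1 := by
  rw [carlitzPoly, carlitzPoly, mul_sum]
  refine sum_congr rfl fun k _ => ?_
  have hinv : (1 - (q⁻¹) ^ (k + 1))⁻¹ = -q ^ (k + 1) * (1 - q ^ (k + 1))⁻¹ := by
    rw [inv_pow, show 1 - (q ^ (k + 1))⁻¹ = -(1 - q ^ (k + 1)) * (q ^ (k + 1))⁻¹ by
      field_simp; ring, mul_inv, inv_inv, inv_neg]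
    ring
  rw [neg_div', div_pow, div_eq_mul_inv _ (1 - q⁻¹ ^ (k + 1)), hinv]
  field_simp
  ring

lemma carlitzPoly_reflection {q : K} (hq : q ≠ 0) (a : K) (n : ℕ) :
    (1 - q⁻¹) / (1 - q⁻¹) ^ n * carlitzPoly q⁻¹ (a / q) n 1 =
      (-1) ^ n * q ^ n * ((1 - q) / (1 - q) ^ n * carlitzPoly q a n 1) := by
  rw [carlitzPoly_inv_div_one hq, show 1 - q⁻¹ = (-q)⁻¹ * (1 - q) by field_simp; ring, mul_pow,
    inv_pow]
  field_simp
  ring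

end ClosedForm

section PadicQIntegral

variable {p : ℕ} [Fact p.Prime] {q : ℚ_[p]}

lemma qNumZ_natCast (m : ℕ) : qNumZ p q m = (1 - q ^ m) / (1 - q) := by
  rw [qNumZ, zpow_natCast]

lemma sum_qNumZ_pow_mul_pow_div (hq0 : q ≠ 0) {n : ℕ} (hq : ∀ k ≤ n, q ^ (k + 1) ≠ 1) (x : ℤ)
    {P : ℕ} (hP : q ^ P ≠ 1) :
    (∑ y ∈ range P, qNumZ p q (x + y) ^ n * q ^ y) / qNumZ p q P =
      (1 - q) / (1 - q) ^ n * carlitzPoly q (q ^ x) n (q ^ P) := by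
  have hq1 : 1 - q ≠ 0 := sub_ne_zero.2 (Ne.symm (by simpa using hq 0 n.zero_le))
  have hP1 : 1 - q ^ P ≠ 0 := sub_ne_zero.2 (Ne.symm hP)
  have hterm (y : ℕ) :
      qNumZ p q (x + y) ^ n * q ^ y = (1 - q ^ x * q ^ y) ^ n * q ^ y / (1 - q) ^ n := by
    rw [qNumZ, zpow_add₀ hq0, zpow_natCast, div_pow, div_mul_eq_mul_div]
  rw [sum_congr rfl fun y _ => hterm y, ← sum_div, sum_one_sub_mul_pow_pow_mul_pow _ hq,
    qNumZ_natCast]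
  field_simp

namespace IsPadicQIntegral

variable {f : ℕ → ℚ_[p]} {I J : ℚ_[p]}

lemma unique (hI : IsPadicQIntegral p q f I) (hJ : IsPadicQIntegral p q f J) : I = J :=
  tendsto_nhds_unique hI hJ

lemma eq_zero_of_eventually_pow_eq_one (h : ∀ᶠ N in atTop, q ^ p ^ N = 1)
    (hI : IsPadicQIntegral p q f I) : I = 0 := by
  refine tendsto_nhds_unique hI (tendsto_const_nhds.congr' (h.mono fun N hN => ?_))
  dsimp only
  rw [← Nat.cast_pow, qNumZ_natCast, hN, sub_self, zero_div, div_zero]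

end IsPadicQIntegral

theorem isPadicQIntegral_qNumZ_pow (hq : ‖1 - q‖ < 1) (hroot : ∀ m ≠ 0, q ^ m ≠ 1) (x : ℤ)
    (n : ℕ) :
    IsPadicQIntegral p q (fun y : ℕ => qNumZ p q (x + y) ^ n)
      ((1 - q) / (1 - q) ^ n * carlitzPoly q (q ^ x) n 1) := by
  have hq0 := ne_zero_of_norm_one_sub_lt_one hq
  have hlim := (((continuous_carlitzPoly q (q ^ x) n).tendsto 1).comp
    (tendsto_pow_pow_nhds_one Padic.norm_p_lt_one hq)).const_mul ((1 - q) / (1 - q) ^ n)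
  refine hlim.congr fun N => ?_
  rw [← Nat.cast_pow, sum_qNumZ_pow_mul_pow_div hq0 (fun k _ => hroot _ k.succ_ne_zero) x
    (hroot _ (pow_ne_zero N (Fact.out : p.Prime).ne_zero))]
  rfl

end PadicQIntegral

/-- Reflection formula for Carlitz q-Bernoulli polynomials:
`β_{n,q⁻¹}(1-x) = (-1)^n q^n β_{n,q}(x)`, where the polynomials are given by
the bosonic p-adic q-integral `β_{n,q}(x) = ∫_{ℤ_p} [x+y]_q^n dμ_q(y)`. -/
theorem carlitz_qBernoulli_reflection (p : ℕ) [Fact p.Prime] (q : ℚ_[p])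
    (hq : ‖1 - q‖ < 1) (x : ℤ) (n : ℕ) (B Brefl : ℚ_[p])
    (hB : IsPadicQIntegral p q (fun y : ℕ => (qNumZ p q (x + y)) ^ n) B)
    (hBrefl : IsPadicQIntegral p q⁻¹ (fun y : ℕ => (qNumZ p q⁻¹ ((1 - x) + y)) ^ n) Brefl) :
    Brefl = (-1 : ℚ_[p]) ^ n * q ^ n * B := by
  by_cases hroot : ∃ m ≠ 0, q ^ m = 1
  · obtain ⟨m, hm, hqm⟩ := hroot
    have hev := eventually_pow_pow_eq_one Padic.norm_p_lt_one hq hm hqm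
    have hev_inv : ∀ᶠ N in atTop, q⁻¹ ^ p ^ N = 1 :=
      hev.mono fun N hN => by rw [inv_pow, hN, inv_one]
    rw [hB.eq_zero_of_eventually_pow_eq_one hev, hBrefl.eq_zero_of_eventually_pow_eq_one hev_inv,
      mul_zero]
  · push Not at hroot
    have hq0 := ne_zero_of_norm_one_sub_lt_one hq
    have hroot_inv : ∀ m ≠ 0, q⁻¹ ^ m ≠ 1 := fun m hm => by
      rw [inv_pow, Ne, inv_eq_one]
      exact hroot m hm
    have hshift : q⁻¹ ^ (1 - x) = q ^ x / q := by
      rw [inv_zpow', neg_sub, zpow_sub_one₀ hq0, div_eq_mul_inv]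
    rw [hB.unique (isPadicQIntegral_qNumZ_pow hq hroot x n),
      hBrefl.unique (isPadicQIntegral_qNumZ_pow (norm_one_sub_inv_lt_one hq) hroot_inv (1 - x) n),
      hshift, carlitzPoly_reflection hq0]
end
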